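/- arXiv:1008.0686 — 3 statements merged into one kernel-verified Lean document; each statement's English description precedes it below -/
import Mathlib

section
/- Let b : ℕ → R be a sequence in a commutative Q(q)-algebra R, and define ∇_q(b)(n) := Σ_{i=0}^{n} q^i ((q^{-n})_i/(q)_i) b(i). Then for every nonnegative integer m: Σ_{n=0}^{m} ∇_q(b)(n) B_n(q^m) = b(m), where B_n(z) := ∏_{j=1}^{n}(z - q^{j-1})/(1 - q^j) and (x)_i := ∏_{k=0}^{i-1}(1 - x q^k). -/
/-- The q-shifted factorial `(x)_i = ∏_{k=0}^{i-1} (1 - x q^k)`. -/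
def qpoch {F : Type*} [Field F] (q x : F) (n : ℕ) : F :=
  ∏ k ∈ Finset.range n, (1 - x * q ^ k)

/-- `B_n(z) = ∏_{j=1}^{n} (z - q^{j-1})/(1 - q^j)`. -/
def Bpoly {F : Type*} [Field F] (q z : F) (n : ℕ) : F :=
  ∏ j ∈ Finset.range n, (z - q ^ j) / (1 - q ^ (j + 1))

/-- `∇_q(b)(n) = Σ_{i=0}^{n} q^i ((q^{-n})_i/(q)_i) b(i)` for a sequence in an algebra. -/
def nablaq {F : Type*} [Field F] {R : Type*} [CommRing R] [Algebra F R]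
    (q : F) (b : ℕ → R) (n : ℕ) : R :=
  ∑ i ∈ Finset.range (n + 1), (q ^ i * qpoch q ((q ^ n)⁻¹) i / qpoch q q i) • b i
/-!
After exchanging the order of summation, the coefficient of `b i` is
`∑_{i ≤ n ≤ m} B_n(q^m) q^i (q^{-n})_i / (q)_i`. Both factors are Gaussian binomials up to
signs and powers of `q`: `B_n(q^m) = (-1)^n q^{C(n,2)} [m, n]_q` and
`q^i (q^{-n})_i / (q)_i = (-1)^i q^{C(i,2) + i - n i} [n, i]_q`. With `n = i + t` and
`[m, i + t] [i + t, i] = [m, i] [m - i, t]` the sum becomes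
`[m, i] ∑_t (-1)^t q^{C(t,2)} [m - i, t]_q`, which by Cauchy's q-binomial theorem at `z = -1` is
`[m, i] (1; q)_{m-i}`, i.e. `1` if `i = m` and `0` otherwise.
-/

open Finset

lemma add_choose_two_add_choose_two (i t : ℕ) :
    (i + t).choose 2 + i.choose 2 + i = t.choose 2 + (i + t) * i := by
  qify
  simp only [Nat.cast_choose_two]
  push_cast
  ring

section QBinomial

variable {F : Type*} [Field F] {q : F}

/-- The Gaussian binomial coefficient `[N, t]_q`. For `t > N` the factor `j = N` vanishes
(truncated subtraction gives `q ^ 0 = 1`), so `qbinom q N t = 0`. -/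
def qbinom (q : F) (N t : ℕ) : F :=
  ∏ j ∈ range t, (1 - q ^ (N - j)) / (1 - q ^ (j + 1))

lemma one_sub_pow_ne_zero (hq1 : ∀ n : ℕ, 1 ≤ n → q ^ n ≠ 1) {k : ℕ} (hk : 1 ≤ k) :
    1 - q ^ k ≠ 0 :=
  sub_ne_zero.mpr (hq1 k hk).symm

lemma qpoch_zero (x : F) : qpoch q x 0 = 1 := prod_range_zero _

lemma qpoch_self_succ (a : ℕ) : qpoch q q (a + 1) = qpoch q q a * (1 - q ^ (a + 1)) := by
  simp only [qpoch, prod_range_succ, pow_succ']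

lemma qpoch_self_eq_prod (a : ℕ) : qpoch q q a = ∏ k ∈ range a, (1 - q ^ (k + 1)) := by
  simp only [qpoch, pow_succ']

lemma qpoch_self_ne_zero (hq1 : ∀ n : ℕ, 1 ≤ n → q ^ n ≠ 1) (a : ℕ) :
    qpoch q q a ≠ 0 := by
  rw [qpoch_self_eq_prod]
  exact prod_ne_zero_iff.mpr fun k _ => one_sub_pow_ne_zero hq1 (Nat.le_add_left 1 k)

lemma qbinom_eq_prod_div (N t : ℕ) :
    qbinom q N t = (∏ j ∈ range t, (1 - q ^ (N - j))) / qpoch q q t := by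
  rw [qbinom, prod_div_distrib, qpoch_self_eq_prod]

lemma prod_one_sub_pow_sub (hq1 : ∀ n : ℕ, 1 ≤ n → q ^ n ≠ 1) {N t : ℕ} (h : t ≤ N) :
    ∏ j ∈ range t, (1 - q ^ (N - j)) = qpoch q q N / qpoch q q (N - t) := by
  induction t with
  | zero => simp [div_self (qpoch_self_ne_zero hq1 N)]
  | succ s ih =>
    obtain ⟨u, rfl⟩ : ∃ u, N = s + 1 + u := ⟨N - (s + 1), by omega⟩
    have hu : s + 1 + u - s = u + 1 := by omega
    rw [prod_range_succ, ih (by omega), hu, qpoch_self_succ, Nat.add_sub_cancel_left]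
    have := qpoch_self_ne_zero hq1 u
    have := one_sub_pow_ne_zero hq1 (Nat.le_add_left 1 u)
    field_simp

lemma qbinom_eq_qpoch_div (hq1 : ∀ n : ℕ, 1 ≤ n → q ^ n ≠ 1) {N t : ℕ} (h : t ≤ N) :
    qbinom q N t = qpoch q q N / (qpoch q q t * qpoch q q (N - t)) := by
  rw [qbinom_eq_prod_div, prod_one_sub_pow_sub hq1 h, div_div, mul_comm (qpoch q q _)]

lemma qbinom_of_lt {N t : ℕ} (h : N < t) : qbinom q N t = 0 :=
  prod_eq_zero (mem_range.mpr h) (by simp)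

@[simp] lemma qbinom_zero_right (N : ℕ) : qbinom q N 0 = 1 := by simp [qbinom]

lemma qbinom_self (hq1 : ∀ n : ℕ, 1 ≤ n → q ^ n ≠ 1) (N : ℕ) : qbinom q N N = 1 := by
  rw [qbinom_eq_qpoch_div hq1 le_rfl, Nat.sub_self, qpoch_zero, mul_one,
    div_self (qpoch_self_ne_zero hq1 N)]

lemma qbinom_succ_succ (hq1 : ∀ n : ℕ, 1 ≤ n → q ^ n ≠ 1) {N t : ℕ} (h : t ≤ N) :
    qbinom q (N + 1) (t + 1) = q ^ (t + 1) * qbinom q N (t + 1) + qbinom q N t := by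
  rcases h.eq_or_lt with rfl | hlt
  · rw [qbinom_self hq1, qbinom_of_lt (Nat.lt_succ_self t), qbinom_self hq1]; ring
  obtain ⟨s, rfl⟩ : ∃ s, N = t + 1 + s := ⟨N - (t + 1), by omega⟩
  rw [qbinom_eq_qpoch_div hq1 (by omega), qbinom_eq_qpoch_div hq1 (by omega),
    qbinom_eq_qpoch_div hq1 (by omega)]
  rw [show t + 1 + s + 1 - (t + 1) = s + 1 by omega, show t + 1 + s - (t + 1) = s by omega,
    show t + 1 + s - t = s + 1 by omega, qpoch_self_succ (t + 1 + s), qpoch_self_succ s, qpoch_self_succ t,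
    show t + 1 + s + 1 = (t + 1) + (s + 1) by ring, pow_add]
  have := qpoch_self_ne_zero hq1 (t + 1 + s)
  have := qpoch_self_ne_zero hq1 s
  have := qpoch_self_ne_zero hq1 t
  have := one_sub_pow_ne_zero hq1 (Nat.le_add_left 1 s)
  have := one_sub_pow_ne_zero hq1 (Nat.le_add_left 1 t)
  field_simp
  ring

theorem prod_one_add_mul_pow_eq_sum_qbinom (hq1 : ∀ n : ℕ, 1 ≤ n → q ^ n ≠ 1) (N : ℕ)
    (z : F) :
    ∏ k ∈ range N, (1 + z * q ^ k)
      = ∑ t ∈ range (N + 1), q ^ t.choose 2 * qbinom q N t * z ^ t := by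
  induction N generalizing z with
  | zero => simp
  | succ N ih =>
    set c : ℕ → F := fun t => q ^ t.choose 2 * qbinom q N t * q ^ t with hc
    have hprod : ∏ k ∈ range (N + 1), (1 + z * q ^ k)
        = (1 + z) * ∑ t ∈ range (N + 1), c t * z ^ t := by
      rw [prod_range_succ']
      simp only [pow_succ', ← mul_assoc, pow_zero, mul_one]
      rw [ih (z * q), mul_comm]
      exact congrArg _ (sum_congr rfl fun t _ => by rw [hc, mul_pow]; ring)
    have hshift : ∑ t ∈ range (N + 1), c t * z ^ t
        = 1 + ∑ t ∈ range (N + 1), c (t + 1) * z ^ (t + 1) := by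
      rw [sum_range_succ', sum_range_succ (fun t => c (t + 1) * z ^ (t + 1)), hc]
      simp [qbinom_of_lt (Nat.lt_succ_self N)]
      ring
    have hpascal : ∀ t ∈ range (N + 1),
        q ^ (t + 1).choose 2 * qbinom q (N + 1) (t + 1) * z ^ (t + 1)
          = c (t + 1) * z ^ (t + 1) + c t * z ^ (t + 1) := by
      intro t ht
      rw [qbinom_succ_succ hq1 (Nat.lt_succ_iff.mp (mem_range.mp ht))]
      simp only [hc, Nat.choose_succ_succ', Nat.choose_one_right]
      ring
    rw [hprod, sum_range_succ' (fun t => q ^ t.choose 2 * qbinom q (N + 1) t * z ^ t),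
      sum_congr rfl hpascal, sum_add_distrib, add_mul, one_mul, mul_sum]
    nth_rewrite 1 [hshift]
    have hz : ∀ t, z * (c t * z ^ t) = c t * z ^ (t + 1) := fun t => by ring
    simp only [hz, Nat.choose_zero_succ, qbinom_zero_right, pow_zero, mul_one]
    ring

theorem sum_qbinom_mul_neg_one_pow (hq1 : ∀ n : ℕ, 1 ≤ n → q ^ n ≠ 1) (N : ℕ) :
    ∑ t ∈ range (N + 1), q ^ t.choose 2 * qbinom q N t * (-1) ^ t = if N = 0 then 1 else 0 := by
  rw [← prod_one_add_mul_pow_eq_sum_qbinom hq1]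
  cases N with
  | zero => simp
  | succ N => simp [prod_range_succ']

lemma qbinom_mul_qbinom (hq1 : ∀ n : ℕ, 1 ≤ n → q ^ n ≠ 1) {m n i : ℕ} (hi : i ≤ n)
    (hn : n ≤ m) : qbinom q m n * qbinom q n i = qbinom q m i * qbinom q (m - i) (n - i) := by
  rw [qbinom_eq_qpoch_div hq1 hn, qbinom_eq_qpoch_div hq1 hi, qbinom_eq_qpoch_div hq1 (hi.trans hn),
    qbinom_eq_qpoch_div hq1 (Nat.sub_le_sub_right hn i), Nat.sub_sub_sub_cancel_right hi]
  have := qpoch_self_ne_zero hq1 n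
  have := qpoch_self_ne_zero hq1 (m - i)
  field_simp

lemma pow_sub_pow_eq_neg_pow_mul {n k : ℕ} (h : k ≤ n) :
    q ^ n - q ^ k = -q ^ k * (1 - q ^ (n - k)) := by
  rw [neg_mul, mul_sub, mul_one, ← pow_add, Nat.add_sub_cancel' h]
  ring

lemma prod_pow_sub_pow {n i : ℕ} (h : i ≤ n) :
    ∏ k ∈ range i, (q ^ n - q ^ k)
      = (-1) ^ i * q ^ i.choose 2 * ∏ k ∈ range i, (1 - q ^ (n - k)) := by
  rw [prod_congr rfl fun k hk => pow_sub_pow_eq_neg_pow_mul ((mem_range.mp hk).le.trans h),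
    prod_mul_distrib, prod_neg, prod_pow_eq_pow_sum, sum_range_id, ← Nat.choose_two_right,
    card_range]

lemma Bpoly_pow_eq {m n : ℕ} (h : n ≤ m) :
    Bpoly q (q ^ m) n = (-1) ^ n * q ^ n.choose 2 * qbinom q m n := by
  rw [Bpoly, prod_div_distrib, ← qpoch_self_eq_prod, prod_pow_sub_pow h, qbinom_eq_prod_div]
  ring

lemma qpoch_inv_pow_mul_pow (hq : q ≠ 0) {n i : ℕ} (h : i ≤ n) :
    qpoch q (q ^ n)⁻¹ i * q ^ (n * i)
      = (-1) ^ i * q ^ i.choose 2 * ∏ k ∈ range i, (1 - q ^ (n - k)) := by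
  have hconst : (q ^ n) ^ i = ∏ _k ∈ range i, q ^ n := by simp
  rw [← prod_pow_sub_pow h, pow_mul, hconst, qpoch, ← prod_mul_distrib]
  refine prod_congr rfl fun k _ => ?_
  field_simp

lemma nablaq_coeff_eq (hq : q ≠ 0) {n i : ℕ} (h : i ≤ n) :
    q ^ i * qpoch q (q ^ n)⁻¹ i / qpoch q q i
      = (-1) ^ i * q ^ (i.choose 2 + i) / q ^ (n * i) * qbinom q n i := by
  rw [← mul_div_cancel_right₀ (qpoch q (q ^ n)⁻¹ i) (pow_ne_zero (n * i) hq),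
    qpoch_inv_pow_mul_pow hq h, qbinom_eq_prod_div, pow_add]
  ring

lemma Bpoly_mul_nablaq_coeff (hq : q ≠ 0) (hq1 : ∀ n : ℕ, 1 ≤ n → q ^ n ≠ 1) {m i t : ℕ}
    (h : i + t ≤ m) :
    Bpoly q (q ^ m) (i + t) * (q ^ i * qpoch q (q ^ (i + t))⁻¹ i / qpoch q q i)
      = qbinom q m i * (q ^ t.choose 2 * qbinom q (m - i) t * (-1) ^ t) := by
  have hsign : ((-1 : F) ^ i) ^ 2 = 1 := by rw [← pow_mul, pow_mul', neg_one_sq, one_pow]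
  have hexp : q ^ (i + t).choose 2 * q ^ (i.choose 2 + i) = q ^ t.choose 2 * q ^ ((i + t) * i) := by
    rw [← pow_add, ← pow_add, ← add_assoc, add_choose_two_add_choose_two]
  have hbin : qbinom q m (i + t) * qbinom q (i + t) i = qbinom q m i * qbinom q (m - i) t := by
    simpa using qbinom_mul_qbinom hq1 (Nat.le_add_right i t) h
  rw [Bpoly_pow_eq h, nablaq_coeff_eq hq (Nat.le_add_right i t)]
  calc _ = ((-1) ^ i) ^ 2 * (-1) ^ t * (q ^ (i + t).choose 2 * q ^ (i.choose 2 + i))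
          / q ^ ((i + t) * i) * (qbinom q m (i + t) * qbinom q (i + t) i) := by ring
    _ = _ := by
      rw [hsign, hexp, hbin]
      field_simp

lemma sum_Bpoly_mul_nablaq_coeff (hq : q ≠ 0) (hq1 : ∀ n : ℕ, 1 ≤ n → q ^ n ≠ 1) {m i : ℕ}
    (h : i ≤ m) :
    ∑ n ∈ Ico i (m + 1), Bpoly q (q ^ m) n * (q ^ i * qpoch q (q ^ n)⁻¹ i / qpoch q q i)
      = if i = m then 1 else 0 := by
  rw [sum_Ico_eq_sum_range, Nat.sub_add_comm h,
    sum_congr rfl fun t ht => Bpoly_mul_nablaq_coeff hq hq1 (by grind),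
    ← mul_sum, sum_qbinom_mul_neg_one_pow hq1]
  rcases h.eq_or_lt with rfl | hlt
  · simp [qbinom_self hq1]
  · simp [hlt.ne, Nat.sub_ne_zero_of_lt hlt]

end QBinomial

theorem stmt_6 {F : Type*} [Field F] {R : Type*} [CommRing R] [Algebra F R]
    (q : F) (hq : q ≠ 0) (hq1 : ∀ n : ℕ, 1 ≤ n → q ^ n ≠ 1) (b : ℕ → R) (m : ℕ) :
    ∑ n ∈ Finset.range (m + 1), Bpoly q (q ^ m) n • nablaq q b n = b m := by
  have hswap : ∑ n ∈ range (m + 1), Bpoly q (q ^ m) n • nablaq q b n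
      = ∑ i ∈ range (m + 1), (∑ n ∈ Ico i (m + 1),
          Bpoly q (q ^ m) n * (q ^ i * qpoch q (q ^ n)⁻¹ i / qpoch q q i)) • b i := by
    simp only [nablaq, smul_sum, smul_smul, sum_smul, range_eq_Ico]
    exact (sum_Ico_Ico_comm 0 (m + 1) _).symm
  rw [hswap, sum_congr rfl fun i hi =>
    by rw [sum_Bpoly_mul_nablaq_coeff hq hq1 (Nat.lt_succ_iff.mp (mem_range.mp hi))]]
  simp [ite_smul]
end

section
/- Let b : ℕ → R be a sequence in a commutative Q(q)-algebra R and let ∇_q(b)(n) := Σ_{i=0}^{n} q^i ((q^{-n})_i/(q)_i) b(i). Then for all nonnegative integers m and l: Σ_{n=0}^{m} ∇_q(b)(l+n) B_n(q^m) = q^{-lm} Σ_{j=0}^{l} q^j ((q^{-l})_j/(q)_j) b(j+m), where B_n(z) := ∏_{k=1}^{n}(z - q^{k-1})/(1 - q^k). -/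
/-!
Writing `B_n(q^{m+1})` through the q-Pascal rule `B_{n+1}(qz) = B_{n+1}(z) - z B_n(z)` and using
`B_{m+1}(q^m) = 0`, the left-hand side `L(m, l)` satisfies `L(m+1, l) = L(m, l) - q^m L(m, l+1)`.
The right-hand side obeys the same recursion because of the case `m = 1`,
`∇b(l) - ∇b(l+1) = q^{-l} ∇(b(· + 1))(l)`, which is a coefficientwise identity between
q-shifted factorials. Induction on `m` finishes the proof.
-/

section QPochhammer

variable {F : Type*} [Field F] (q : F)

lemma one_sub_pow_succ_ne_zero (hq1 : ∀ n : ℕ, 1 ≤ n → q ^ n ≠ 1) (k : ℕ) :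
    1 - q ^ (k + 1) ≠ 0 :=
  sub_ne_zero.mpr (hq1 (k + 1) k.succ_pos).symm

lemma qpoch_succ (x : F) (n : ℕ) : qpoch q x (n + 1) = qpoch q x n * (1 - x * q ^ n) :=
  Finset.prod_range_succ _ _

lemma qpoch_succ' (x : F) (n : ℕ) : qpoch q x (n + 1) = (1 - x) * qpoch q (x * q) n := by
  simp only [qpoch, Finset.prod_range_succ', pow_succ', pow_zero, mul_one, mul_assoc]
  ring

lemma qpoch_inv_pow_eq_zero {N i : ℕ} (hq : q ≠ 0) (h : N < i) : qpoch q (q ^ N)⁻¹ i = 0 :=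
  Finset.prod_eq_zero (Finset.mem_range.mpr h) <| by
    rw [inv_mul_cancel₀ (pow_ne_zero _ hq), sub_self]

lemma qpoch_succ_sub_qpoch_mul_inv_succ (hq : q ≠ 0) (x : F) (n : ℕ) :
    qpoch q x (n + 1) - qpoch q (x * q⁻¹) (n + 1) =
      x * q⁻¹ * (1 - q ^ (n + 1)) * qpoch q x n := by
  rw [qpoch_succ, qpoch_succ']
  field_simp
  ring

end QPochhammer

section Nabla

variable {F : Type*} [Field F] (q : F)

def nablaqCoeff (N i : ℕ) : F := q ^ i * qpoch q (q ^ N)⁻¹ i / qpoch q q i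

lemma nablaq_eq_sum_nablaqCoeff {R : Type*} [CommRing R] [Algebra F R] (b : ℕ → R) (N : ℕ) :
    nablaq q b N = ∑ i ∈ Finset.range (N + 1), nablaqCoeff q N i • b i :=
  rfl

lemma nablaqCoeff_zero_right (N : ℕ) : nablaqCoeff q N 0 = 1 := by
  simp [nablaqCoeff, qpoch]

lemma nablaqCoeff_succ_self (hq : q ≠ 0) (N : ℕ) : nablaqCoeff q N (N + 1) = 0 := by
  rw [nablaqCoeff, qpoch_inv_pow_eq_zero q hq N.lt_succ_self, mul_zero, zero_div]

lemma nablaqCoeff_sub_nablaqCoeff_succ (hq : q ≠ 0) {i : ℕ} (hqi : 1 - q ^ (i + 1) ≠ 0)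
    (N : ℕ) :
    nablaqCoeff q N (i + 1) - nablaqCoeff q (N + 1) (i + 1) = (q ^ N)⁻¹ * nablaqCoeff q N i := by
  have hsplit : (q ^ (N + 1))⁻¹ = (q ^ N)⁻¹ * q⁻¹ := by rw [pow_succ, mul_inv]
  simp only [nablaqCoeff, hsplit, ← sub_div, ← mul_sub, qpoch_succ_sub_qpoch_mul_inv_succ q hq,
    qpoch_succ q q i, ← pow_succ']
  field_simp
  ring

lemma nablaq_sub_nablaq_succ {R : Type*} [CommRing R] [Algebra F R] (hq : q ≠ 0)
    (hq1 : ∀ n : ℕ, 1 ≤ n → q ^ n ≠ 1) (b : ℕ → R) (N : ℕ) :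
    nablaq q b N - nablaq q b (N + 1) = (q ^ N)⁻¹ • nablaq q (fun i ↦ b (i + 1)) N := by
  have hN : nablaq q b N = ∑ i ∈ Finset.range (N + 2), nablaqCoeff q N i • b i := by
    rw [Finset.sum_range_succ, nablaqCoeff_succ_self q hq, zero_smul, add_zero]; rfl
  rw [hN, nablaq_eq_sum_nablaqCoeff, ← Finset.sum_sub_distrib, Finset.sum_range_succ',
    nablaqCoeff_zero_right, nablaqCoeff_zero_right, sub_self, add_zero,
    nablaq_eq_sum_nablaqCoeff, Finset.smul_sum]
  refine Finset.sum_congr rfl fun i _ ↦ ?_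
  rw [← sub_smul, nablaqCoeff_sub_nablaqCoeff_succ q hq (one_sub_pow_succ_ne_zero q hq1 i),
    smul_smul]

end Nabla

section Bpoly

variable {F : Type*} [Field F] (q : F)

lemma Bpoly_zero (z : F) : Bpoly q z 0 = 1 :=
  Finset.prod_range_zero _

lemma Bpoly_succ (z : F) (n : ℕ) :
    Bpoly q z (n + 1) = Bpoly q z n * ((z - q ^ n) / (1 - q ^ (n + 1))) :=
  Finset.prod_range_succ _ _

lemma Bpoly_pow_self_succ (m : ℕ) : Bpoly q (q ^ m) (m + 1) = 0 := by
  rw [Bpoly_succ, sub_self, zero_div, mul_zero]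

lemma Bpoly_mul_succ (hq1 : ∀ n : ℕ, 1 ≤ n → q ^ n ≠ 1) (z : F) (n : ℕ) :
    Bpoly q (q * z) (n + 1) = Bpoly q z (n + 1) - z * Bpoly q z n := by
  induction n with
  | zero =>
    have := one_sub_pow_succ_ne_zero q hq1 0
    simp only [Bpoly_succ, Bpoly_zero]
    field_simp
    ring
  | succ n ih =>
    have := one_sub_pow_succ_ne_zero q hq1 n
    have := one_sub_pow_succ_ne_zero q hq1 (n + 1)
    rw [Bpoly_succ q (q * z) (n + 1), ih, Bpoly_succ q z (n + 1), Bpoly_succ q z n]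
    field_simp
    ring

lemma sum_Bpoly_mul_smul {M : Type*} [AddCommGroup M] [Module F M]
    (hq1 : ∀ n : ℕ, 1 ≤ n → q ^ n ≠ 1) (z : F) (f : ℕ → M) (N : ℕ) :
    ∑ n ∈ Finset.range (N + 1), Bpoly q (q * z) n • f n =
      ∑ n ∈ Finset.range (N + 1), Bpoly q z n • f n -
        z • ∑ n ∈ Finset.range N, Bpoly q z n • f (n + 1) := by
  simp only [Finset.sum_range_succ' _ N, Bpoly_mul_succ q hq1, Bpoly_zero, sub_smul,
    Finset.sum_sub_distrib, Finset.smul_sum, smul_smul]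
  abel

lemma sum_Bpoly_pow_succ_smul {M : Type*} [AddCommGroup M] [Module F M]
    (hq1 : ∀ n : ℕ, 1 ≤ n → q ^ n ≠ 1) (f : ℕ → M) (m : ℕ) :
    ∑ n ∈ Finset.range (m + 2), Bpoly q (q ^ (m + 1)) n • f n =
      ∑ n ∈ Finset.range (m + 1), Bpoly q (q ^ m) n • f n -
        q ^ m • ∑ n ∈ Finset.range (m + 1), Bpoly q (q ^ m) n • f (n + 1) := by
  rw [pow_succ', sum_Bpoly_mul_smul q hq1, Finset.sum_range_succ _ (m + 1),
    Bpoly_pow_self_succ, zero_smul, add_zero]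

end Bpoly

lemma sum_Bpoly_pow_smul_nablaq {F : Type*} [Field F] {R : Type*} [CommRing R] [Algebra F R]
    (q : F) (hq : q ≠ 0) (hq1 : ∀ n : ℕ, 1 ≤ n → q ^ n ≠ 1) (b : ℕ → R)
    (m l : ℕ) :
    ∑ n ∈ Finset.range (m + 1), Bpoly q (q ^ m) n • nablaq q b (l + n) =
      (q ^ (l * m))⁻¹ • nablaq q (fun j ↦ b (j + m)) l := by
  induction m generalizing l with
  | zero => simp [Bpoly_zero]
  | succ m ih =>
    have hshift : (fun j ↦ b (j + 1 + m)) = fun j ↦ b (j + (m + 1)) := by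
      funext j; rw [add_right_comm, add_assoc]
    have hpow : q ^ m * (q ^ ((l + 1) * m))⁻¹ = (q ^ (l * m))⁻¹ := by
      rw [add_one_mul, pow_add, mul_inv]
      field_simp
    calc ∑ n ∈ Finset.range (m + 2), Bpoly q (q ^ (m + 1)) n • nablaq q b (l + n)
        = (q ^ (l * m))⁻¹ • (nablaq q (fun j ↦ b (j + m)) l -
            nablaq q (fun j ↦ b (j + m)) (l + 1)) := by
          simp only [sum_Bpoly_pow_succ_smul q hq1, ← add_assoc, add_right_comm l _ 1, ih,
            smul_smul, hpow, smul_sub]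
      _ = (q ^ (l * (m + 1)))⁻¹ • nablaq q (fun j ↦ b (j + (m + 1))) l := by
          rw [nablaq_sub_nablaq_succ q hq hq1, smul_smul, hshift, ← mul_inv, ← pow_add,
            mul_add_one]

theorem stmt_7 {F : Type*} [Field F] {R : Type*} [CommRing R] [Algebra F R]
    (q : F) (hq : q ≠ 0) (hq1 : ∀ n : ℕ, 1 ≤ n → q ^ n ≠ 1) (b : ℕ → R) (m l : ℕ) :
    ∑ n ∈ Finset.range (m + 1), Bpoly q (q ^ m) n • nablaq q b (l + n) =
      (q ^ (l * m))⁻¹ •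
        ∑ j ∈ Finset.range (l + 1),
          (q ^ j * qpoch q ((q ^ l)⁻¹) j / qpoch q q j) • b (j + m) :=
  sum_Bpoly_pow_smul_nablaq q hq hq1 b m l
end

section
/- Define, for a composition k = (k₁,…,k_r) and n ∈ ℕ, S_k(n) := Σ_{n ≥ m₁ ≥ ⋯ ≥ m_r ≥ 1} q^{m₁+⋯+m_r} / ([m₁]^{k₁}⋯[m_r]^{k_r}) with [m] = (1-q^m)/(1-q). Then for all i, j ≥ 1 and n ∈ ℕ: S_{(i)}(n) · S_{(j)}(n) = S_{(i,j)}(n) + S_{(j,i)}(n) - S_{(i+j)}(n) + (1-q) S_{(i+j-1)}(n). -/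
/-- The q-integer `[m] = (1-q^m)/(1-q)`. -/
def qint {F : Type*} [Field F] (q : F) (k : ℕ) : F :=
  (1 - q ^ k) / (1 - q)

/-- Depth-one sum `S_{(i)}(n) = Σ_{n ≥ m ≥ 1} q^m/[m]^i`. -/
def S1 {F : Type*} [Field F] (q : F) (i n : ℕ) : F :=
  ∑ m ∈ Finset.Icc 1 n, q ^ m / qint q m ^ i

/-- Depth-two sum `S_{(i,j)}(n) = Σ_{n ≥ m₁ ≥ m₂ ≥ 1} q^{m₁+m₂}/([m₁]^i [m₂]^j)`. -/
def S2 {F : Type*} [Field F] (q : F) (i j n : ℕ) : F :=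
  ∑ m₁ ∈ Finset.Icc 1 n, ∑ m₂ ∈ Finset.Icc 1 m₁,
    q ^ (m₁ + m₂) / (qint q m₁ ^ i * qint q m₂ ^ j)

/-!
Multiply out `S_{(i)}(n) S_{(j)}(n)` as a sum over the square `[1, n]²`. The square together
with a second copy of its diagonal is the union of the two triangles `m₁ ≥ m₂` and `m₂ ≥ m₁`,
which give `S_{(i,j)}(n)` and `S_{(j,i)}(n)`. On the diagonal `q^m = 1 - (1 - q)[m]`, so
`q^{2m}/[m]^{i+j} = q^m/[m]^{i+j} - (1 - q) q^m/[m]^{i+j-1}` and the diagonal contributes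
`S_{(i+j)}(n) - (1 - q) S_{(i+j-1)}(n)`.
-/

open Finset

theorem Finset.sum_Icc_sum_Icc_add_sum_diag {M : Type*} [AddCommMonoid M] (f : ℕ → ℕ → M)
    (n : ℕ) :
    ∑ m₁ ∈ Icc 1 n, ∑ m₂ ∈ Icc 1 n, f m₁ m₂ + ∑ m ∈ Icc 1 n, f m m =
      ∑ m₁ ∈ Icc 1 n, ∑ m₂ ∈ Icc 1 m₁, f m₁ m₂ + ∑ m₁ ∈ Icc 1 n, ∑ m₂ ∈ Icc 1 m₁, f m₂ m₁ := by
  induction n with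
  | zero => simp
  | succ n ih =>
    have h : 1 ≤ n + 1 := Nat.le_add_left 1 n
    simp_rw [sum_Icc_succ_top h, sum_add_distrib]
    abel_nf
    rw [← ih]
    abel

section QInt

variable {F : Type*} [Field F] {q : F}

theorem one_sub_mul_qint (hq : q ≠ 1) (m : ℕ) : (1 - q) * qint q m = 1 - q ^ m :=
  mul_div_cancel₀ _ (sub_ne_zero.mpr hq.symm)

theorem qint_ne_zero (hq : q ≠ 1) {m : ℕ} (hm : q ^ m ≠ 1) : qint q m ≠ 0 :=
  div_ne_zero (sub_ne_zero.mpr hm.symm) (sub_ne_zero.mpr hq.symm)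

theorem pow_add_self_div_qint_pow_succ (hq : q ≠ 1) {m : ℕ} (hm : q ^ m ≠ 1) (k : ℕ) :
    q ^ (m + m) / qint q m ^ (k + 1) =
      q ^ m / qint q m ^ (k + 1) - (1 - q) * (q ^ m / qint q m ^ k) := by
  have h := qint_ne_zero hq hm
  field_simp
  linear_combination (q ^ m * qint q m ^ k) * one_sub_mul_qint hq m

theorem S1_mul_S1 (i j n : ℕ) :
    S1 q i n * S1 q j n =
      ∑ m₁ ∈ Icc 1 n, ∑ m₂ ∈ Icc 1 n, q ^ (m₁ + m₂) / (qint q m₁ ^ i * qint q m₂ ^ j) := by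
  simp_rw [S1, sum_mul_sum, pow_add, div_mul_div_comm]

theorem S2_eq_sum_swap (i j n : ℕ) :
    S2 q j i n =
      ∑ m₁ ∈ Icc 1 n, ∑ m₂ ∈ Icc 1 m₁, q ^ (m₂ + m₁) / (qint q m₂ ^ i * qint q m₁ ^ j) := by
  simp_rw [S2, add_comm, mul_comm]

theorem sum_diag_eq_S1_sub (hq : ∀ n : ℕ, 1 ≤ n → q ^ n ≠ 1) {i j : ℕ} (hij : 1 ≤ i + j)
    (n : ℕ) :
    ∑ m ∈ Icc 1 n, q ^ (m + m) / (qint q m ^ i * qint q m ^ j) =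
      S1 q (i + j) n - (1 - q) * S1 q (i + j - 1) n := by
  have hq1 : q ≠ 1 := by simpa using hq 1 le_rfl
  obtain ⟨k, hk⟩ : ∃ k, i + j = k + 1 := ⟨i + j - 1, by omega⟩
  rw [S1, S1, mul_sum, ← sum_sub_distrib, hk, Nat.add_sub_cancel]
  refine sum_congr rfl fun m hm => ?_
  rw [← pow_add, hk, pow_add_self_div_qint_pow_succ hq1 (hq m (mem_Icc.mp hm).1)]

end QInt

theorem stmt_13_general {F : Type*} [Field F] (q : F)
    (hq1 : ∀ n : ℕ, 1 ≤ n → q ^ n ≠ 1) (i j n : ℕ) (hi : 1 ≤ i) :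
    S1 q i n * S1 q j n =
      S2 q i j n + S2 q j i n - S1 q (i + j) n + (1 - q) * S1 q (i + j - 1) n := by
  have h := sum_Icc_sum_Icc_add_sum_diag
    (fun m₁ m₂ => q ^ (m₁ + m₂) / (qint q m₁ ^ i * qint q m₂ ^ j)) n
  rw [← S1_mul_S1, sum_diag_eq_S1_sub hq1 (by omega), ← S2_eq_sum_swap] at h
  rw [S2, ← h]
  ring

theorem stmt_13 {F : Type*} [Field F] (q : F)
    (hq1 : ∀ n : ℕ, 1 ≤ n → q ^ n ≠ 1) (i j n : ℕ) (hi : 1 ≤ i) (hj : 1 ≤ j) :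
    S1 q i n * S1 q j n =
      S2 q i j n + S2 q j i n - S1 q (i + j) n + (1 - q) * S1 q (i + j - 1) n :=
  stmt_13_general q hq1 i j n hi
end
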